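/- Let G(E) be a graph inverse semigroup endowed with a Hausdorff topology making it a semitopological semigroup (all left and right translations are continuous). Then every nonzero element of G(E) is an isolated point. -/

import Mathlib

/-- A directed graph: vertices, edges, source and range maps. -/
structure DGraph where
  V : Type
  E : Type
  s : E → V
  r : E → V

namespace DGraph

variable {Q : DGraph}

/-- `pOk Q a l` : the list of edges `l` forms a valid path starting at vertex `a`. -/
def pOk (Q : DGraph) : Q.V → List Q.E → Prop
  | _, [] => True
  | a, e :: l => Q.s e = a ∧ pOk Q (Q.r e) l

/-- The end vertex of an edge-list starting at `a`. -/
def pRng (Q : DGraph) (a : Q.V) (l : List Q.E) : Q.V :=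
  l.foldl (fun _ e => Q.r e) a

theorem pRng_append (a : Q.V) (l₁ l₂ : List Q.E) :
    pRng Q a (l₁ ++ l₂) = pRng Q (pRng Q a l₁) l₂ :=
  List.foldl_append

theorem pOk_append {a : Q.V} {l₁ l₂ : List Q.E} (h₁ : pOk Q a l₁)
    (h₂ : pOk Q (pRng Q a l₁) l₂) : pOk Q a (l₁ ++ l₂) := by
  induction l₁ generalizing a with
  | nil => simpa [pRng] using h₂
  | cons e l ih =>
      obtain ⟨he, hl⟩ := h₁
      exact ⟨he, ih hl h₂⟩

theorem pOk_drop {a : Q.V} {l₁ l₂ : List Q.E} (h : pOk Q a (l₁ ++ l₂)) :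
    pOk Q (pRng Q a l₁) l₂ := by
  induction l₁ generalizing a with
  | nil => simpa [pRng] using h
  | cons e l ih => exact ih h.2

/-- A (finite, directed) path in the graph `Q`: a start vertex together with a
compatible list of edges.  Paths of length `0` are vertices. -/
structure GPath (Q : DGraph) where
  start : Q.V
  edges : List Q.E
  ok : pOk Q start edges

/-- The source `s(p)` of a path. -/
def GPath.src (p : GPath Q) : Q.V := p.start

/-- The range `r(p)` of a path. -/
def GPath.rng (p : GPath Q) : Q.V := pRng Q p.start p.edges

/-- The length `|p|` of a path. -/
def GPath.length (p : GPath Q) : ℕ := p.edges.length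

/-- The trivial (length zero) path at a vertex `a`. -/
def GPath.triv (Q : DGraph) (a : Q.V) : GPath Q := ⟨a, [], trivial⟩

/-- Concatenation of composable paths. -/
def GPath.comp (p q : GPath Q) (h : p.rng = q.start) : GPath Q :=
  ⟨p.start, p.edges ++ q.edges, pOk_append p.ok (by
    have hq := q.ok
    rw [← h] at hq
    exact hq)⟩

theorem GPath.comp_rng (p q : GPath Q) (h : p.rng = q.start) :
    (p.comp q h).rng = q.rng := by
  show pRng Q p.start (p.edges ++ q.edges) = q.rng
  rw [pRng_append, show pRng Q p.start p.edges = q.start from h]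
  rfl

theorem exists_sub {p q : GPath Q} (h1 : q.start = p.start)
    (h2 : p.edges <+: q.edges) :
    ∃ w : GPath Q, w.start = p.rng ∧ w.rng = q.rng ∧ p.edges ++ w.edges = q.edges := by
  obtain ⟨t, ht⟩ := h2
  have hok : pOk Q p.start (p.edges ++ t) := by rw [ht, ← h1]; exact q.ok
  refine ⟨⟨p.rng, t, pOk_drop hok⟩, rfl, ?_, ht⟩
  show pRng Q (pRng Q p.start p.edges) t = pRng Q q.start q.edges
  rw [← pRng_append, ht, ← h1]

/-- If the path `q` decomposes as `p·w`, this is the path `w`. -/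
noncomputable def subPath (p q : GPath Q) (h1 : q.start = p.start)
    (h2 : p.edges <+: q.edges) : GPath Q :=
  (exists_sub h1 h2).choose

theorem subPath_spec (p q : GPath Q) (h1 : q.start = p.start)
    (h2 : p.edges <+: q.edges) :
    (subPath p q h1 h2).start = p.rng ∧ (subPath p q h1 h2).rng = q.rng ∧
      p.edges ++ (subPath p q h1 h2).edges = q.edges :=
  (exists_sub h1 h2).choose_spec

/-- The graph inverse semigroup `G(E)` over the graph `Q`: the element `0`
together with the elements `u v⁻¹` where `u, v` are paths with `r(u) = r(v)`. -/
inductive GIS (Q : DGraph) : Type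
  | zero : GIS Q
  | elm (u v : GPath Q) (h : u.rng = v.rng) : GIS Q

instance : Zero (GIS Q) := ⟨GIS.zero⟩

-- Multiplication in the graph inverse semigroup:
-- `u₁v₁⁻¹ · u₂v₂⁻¹ = u₁wv₂⁻¹` if `u₂ = v₁w`, `u₁(v₂w)⁻¹` if `v₁ = u₂w`, `0` otherwise.
open Classical in
noncomputable def GIS.mul : GIS Q → GIS Q → GIS Q
  | .zero, _ => .zero
  | _, .zero => .zero
  | .elm u₁ v₁ h₁, .elm u₂ v₂ h₂ =>
    if hA : u₂.start = v₁.start ∧ v₁.edges <+: u₂.edges then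
      GIS.elm (u₁.comp (subPath v₁ u₂ hA.1 hA.2)
          (by rw [(subPath_spec v₁ u₂ hA.1 hA.2).1, h₁]))
        v₂
        (by rw [GPath.comp_rng, (subPath_spec v₁ u₂ hA.1 hA.2).2.1, h₂])
    else if hB : v₁.start = u₂.start ∧ u₂.edges <+: v₁.edges then
      GIS.elm u₁
        (v₂.comp (subPath u₂ v₁ hB.1 hB.2)
          (by rw [(subPath_spec u₂ v₁ hB.1 hB.2).1, h₂]))
        (by rw [GPath.comp_rng, (subPath_spec u₂ v₁ hB.1 hB.2).2.1, h₁])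
    else .zero

noncomputable instance : Mul (GIS Q) := ⟨GIS.mul⟩

/-- The inversion map of the graph inverse semigroup: `(uv⁻¹)⁻¹ = vu⁻¹`, `0⁻¹ = 0`. -/
def GIS.inv : GIS Q → GIS Q
  | .zero => .zero
  | .elm u v h => .elm v u h.symm

/-- The canonical identification of a path `u` with the element `u · r(u)⁻¹` of `G(E)`. -/
def toGIS (p : GPath Q) : GIS Q := GIS.elm p (GPath.triv Q p.rng) rfl

end DGraph



namespace DGraph

variable {Q : DGraph}

theorem GPath.ext' : ∀ {p q : GPath Q}, p.start = q.start → p.edges = q.edges → p = q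
  | ⟨a, l, hl⟩, ⟨a', l', hl'⟩, h1, h2 => by
    simp only at h1 h2; subst h1; subst h2; rfl

theorem triv_start (a : Q.V) : (GPath.triv Q a).start = a := rfl
theorem triv_edges (a : Q.V) : (GPath.triv Q a).edges = [] := rfl
theorem triv_rng (a : Q.V) : (GPath.triv Q a).rng = a := rfl

theorem mul_def (a b : GIS Q) : a * b = GIS.mul a b := rfl
theorem zero_mul' (b : GIS Q) : (0 : GIS Q) * b = 0 := by cases b <;> rfl
theorem mul_zero' (a : GIS Q) : a * (0 : GIS Q) = 0 := by cases a <;> rfl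

theorem elm_ne_zero {u v : GPath Q} {h : u.rng = v.rng} : GIS.elm u v h ≠ 0 := by
  intro hc; cases hc

theorem elm_inj {u v u' v' : GPath Q} {h : u.rng = v.rng} {h' : u'.rng = v'.rng}
    (he : GIS.elm u v h = GIS.elm u' v' h') : u = u' ∧ v = v' := by
  injection he with h1 h2; exact ⟨h1, h2⟩

theorem mul_elm_A {u₁ v₁ u₂ v₂ : GPath Q} (h₁ : u₁.rng = v₁.rng) (h₂ : u₂.rng = v₂.rng)
    (hA : u₂.start = v₁.start ∧ v₁.edges <+: u₂.edges) :
    ∃ (c : GPath Q) (hc : c.rng = v₂.rng) (t : List Q.E),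
      GIS.elm u₁ v₁ h₁ * GIS.elm u₂ v₂ h₂ = GIS.elm c v₂ hc ∧
      c.start = u₁.start ∧ c.edges = u₁.edges ++ t ∧ v₁.edges ++ t = u₂.edges := by
  obtain ⟨hst, hrng, hed⟩ := subPath_spec v₁ u₂ hA.1 hA.2
  refine ⟨u₁.comp (subPath v₁ u₂ hA.1 hA.2) (by rw [h₁, ← hst]),
    by rw [GPath.comp_rng, hrng, h₂], (subPath v₁ u₂ hA.1 hA.2).edges, ?_, rfl, rfl, hed⟩
  show GIS.mul _ _ = _
  simp only [GIS.mul]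
  rw [dif_pos hA]

theorem mul_elm_B {u₁ v₁ u₂ v₂ : GPath Q} (h₁ : u₁.rng = v₁.rng) (h₂ : u₂.rng = v₂.rng)
    (hnA : ¬(u₂.start = v₁.start ∧ v₁.edges <+: u₂.edges))
    (hB : v₁.start = u₂.start ∧ u₂.edges <+: v₁.edges) :
    ∃ (d : GPath Q) (hd : u₁.rng = d.rng) (t : List Q.E),
      GIS.elm u₁ v₁ h₁ * GIS.elm u₂ v₂ h₂ = GIS.elm u₁ d hd ∧
      d.start = v₂.start ∧ d.edges = v₂.edges ++ t ∧ u₂.edges ++ t = v₁.edges := by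
  obtain ⟨hst, hrng, hed⟩ := subPath_spec u₂ v₁ hB.1 hB.2
  refine ⟨v₂.comp (subPath u₂ v₁ hB.1 hB.2) (by rw [← h₂, ← hst]),
    by rw [GPath.comp_rng, hrng, h₁], (subPath u₂ v₁ hB.1 hB.2).edges, ?_, rfl, rfl, hed⟩
  show GIS.mul _ _ = _
  simp only [GIS.mul]
  rw [dif_neg hnA, dif_pos hB]

theorem mul_elm_zero {u₁ v₁ u₂ v₂ : GPath Q} (h₁ : u₁.rng = v₁.rng) (h₂ : u₂.rng = v₂.rng)
    (hnA : ¬(u₂.start = v₁.start ∧ v₁.edges <+: u₂.edges))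
    (hnB : ¬(v₁.start = u₂.start ∧ u₂.edges <+: v₁.edges)) :
    GIS.elm u₁ v₁ h₁ * GIS.elm u₂ v₂ h₂ = 0 := by
  show GIS.mul _ _ = _
  simp only [GIS.mul]
  rw [dif_neg hnA, dif_neg hnB]
  rfl

end DGraph
namespace DGraph

variable {Q : DGraph}

/-- The idempotent `a·a⁻¹` at a vertex `a`. -/
def vIdem (Q : DGraph) (a : Q.V) : GIS Q :=
  GIS.elm (GPath.triv Q a) (GPath.triv Q a) rfl

/-- The length-one path given by the edge `g`. -/
def edgePath (g : Q.E) : GPath Q := ⟨Q.s g, [g], rfl, trivial⟩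

theorem edgePath_start (g : Q.E) : (edgePath (Q := Q) g).start = Q.s g := rfl
theorem edgePath_edges (g : Q.E) : (edgePath (Q := Q) g).edges = [g] := rfl

/-- The idempotent `g·g⁻¹` for an edge `g`. -/
def edgeIdem (g : Q.E) : GIS Q := GIS.elm (edgePath g) (edgePath g) rfl

theorem vIdem_ne_zero {a : Q.V} : vIdem Q a ≠ 0 := elm_ne_zero
theorem edgeIdem_ne_zero {g : Q.E} : edgeIdem (Q := Q) g ≠ 0 := elm_ne_zero

theorem edgeIdem_ne_vIdem {g : Q.E} {a : Q.V} : edgeIdem (Q := Q) g ≠ vIdem Q a := by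
  intro hc
  have := congrArg GPath.edges (elm_inj hc).1
  simp [edgePath, GPath.triv] at this

theorem vIdem_mul_eq_self {p q : GPath Q} {h : p.rng = q.rng} {a : Q.V} (hp : p.start = a) :
    vIdem Q a * GIS.elm p q h = GIS.elm p q h := by
  obtain ⟨c, hc, t, he, hcs, hce, hct⟩ :=
    mul_elm_A (u₁ := GPath.triv Q a) (v₁ := GPath.triv Q a) rfl h ⟨hp, List.nil_prefix⟩
  first | unfold vIdem | unfold edgeIdem
  rw [he]
  have : c = p := GPath.ext' (by rw [hcs, triv_start, hp]) (by
    rw [hce, triv_edges, List.nil_append] at *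
    simpa [triv_edges] using hct)
  subst this; rfl

theorem vIdem_mul_eq_zero {p q : GPath Q} {h : p.rng = q.rng} {a : Q.V} (hp : p.start ≠ a) :
    vIdem Q a * GIS.elm p q h = 0 := by
  refine mul_elm_zero rfl h (fun hA => hp ?_) (fun hB => hp ?_)
  · exact hA.1
  · exact hB.1.symm

theorem mul_vIdem_eq_self {p q : GPath Q} {h : p.rng = q.rng} {a : Q.V} (hq : q.start = a) :
    GIS.elm p q h * vIdem Q a = GIS.elm p q h := by
  by_cases hqe : q.edges = []
  · obtain ⟨c, hc, t, he, hcs, hce, hct⟩ :=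
      mul_elm_A (u₂ := GPath.triv Q a) (v₂ := GPath.triv Q a) h rfl
        ⟨by rw [triv_start, hq], by rw [hqe]; exact List.nil_prefix⟩
    first | unfold vIdem | unfold edgeIdem
    rw [he]
    rw [hqe, List.nil_append, triv_edges] at hct
    have hcp : c = p := GPath.ext' hcs (by rw [hce, hct, List.append_nil])
    have hqt : GPath.triv Q a = q := GPath.ext' (by rw [triv_start, hq]) (by rw [triv_edges, hqe])
    subst hcp; subst hqt; rfl
  · obtain ⟨d, hd, t, he, hds, hde, hdt⟩ :=
      mul_elm_B (u₂ := GPath.triv Q a) (v₂ := GPath.triv Q a) h rfl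
        (fun hA => hqe (List.prefix_nil.mp hA.2)) ⟨by rw [triv_start, hq], List.nil_prefix⟩
    first | unfold vIdem | unfold edgeIdem
    rw [he]
    rw [triv_edges, List.nil_append] at hdt
    have : d = q := GPath.ext' (by rw [hds, triv_start, hq])
      (by rw [hde, triv_edges, List.nil_append, hdt])
    subst this; rfl

theorem mul_vIdem_eq_zero {p q : GPath Q} {h : p.rng = q.rng} {a : Q.V} (hq : q.start ≠ a) :
    GIS.elm p q h * vIdem Q a = 0 := by
  refine mul_elm_zero h rfl (fun hA => hq ?_) (fun hB => hq ?_)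
  · exact hA.1.symm
  · exact hB.1

theorem vIdem_mul_vIdem {a : Q.V} : vIdem Q a * vIdem Q a = vIdem Q a :=
  vIdem_mul_eq_self rfl

theorem edgeIdem_mul_eq_self {p q : GPath Q} {h : p.rng = q.rng} {g : Q.E} {tl : List Q.E}
    (hp : p.edges = g :: tl) :
    edgeIdem g * GIS.elm p q h = GIS.elm p q h := by
  have hstart : Q.s g = p.start := by
    have := p.ok; rw [hp] at this; exact this.1
  obtain ⟨c, hc, t, he, hcs, hce, hct⟩ :=
    mul_elm_A (u₁ := edgePath g) (v₁ := edgePath g) rfl h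
      ⟨hstart.symm, by rw [edgePath_edges, hp]; exact ⟨tl, rfl⟩⟩
  first | unfold vIdem | unfold edgeIdem
  rw [he]
  have : c = p := GPath.ext' (by rw [hcs, edgePath_start, hstart]) (by
    rw [hce, edgePath_edges]; rw [edgePath_edges] at hct; exact hct)
  subst this; rfl

theorem edgeIdem_mul_eq_zero {p q : GPath Q} {h : p.rng = q.rng} {g g' : Q.E} {tl : List Q.E}
    (hne : g ≠ g') (hp : p.edges = g' :: tl) :
    edgeIdem g * GIS.elm p q h = 0 := by
  refine mul_elm_zero rfl h (fun hA => ?_) (fun hB => ?_)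
  · have := hA.2; rw [edgePath_edges, hp, List.cons_prefix_cons] at this
    exact hne this.1
  · have := hB.2; rw [edgePath_edges, hp, List.cons_prefix_cons] at this
    exact hne this.1.symm

theorem mul_edgeIdem_eq_self {p q : GPath Q} {h : p.rng = q.rng} {g : Q.E} {tl : List Q.E}
    (hq : q.edges = g :: tl) :
    GIS.elm p q h * edgeIdem g = GIS.elm p q h := by
  have hstart : Q.s g = q.start := by
    have := q.ok; rw [hq] at this; exact this.1
  by_cases htl : tl = []
  · obtain ⟨c, hc, t, he, hcs, hce, hct⟩ :=
      mul_elm_A (u₂ := edgePath g) (v₂ := edgePath g) h rfl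
        ⟨by rw [edgePath_start, hstart], by
          rw [hq, htl, edgePath_edges]⟩
    first | unfold vIdem | unfold edgeIdem
    rw [he]
    rw [hq, htl, edgePath_edges] at hct
    have ht : t = [] := by
      have := congrArg List.length hct; simpa using this
    have hcp : c = p := GPath.ext' hcs (by rw [hce, ht, List.append_nil])
    have hqt : edgePath g = q := GPath.ext' (by rw [edgePath_start, hstart])
      (by rw [edgePath_edges, hq, htl])
    subst hcp; subst hqt; rfl
  · obtain ⟨d, hd, t, he, hds, hde, hdt⟩ :=
      mul_elm_B (u₂ := edgePath g) (v₂ := edgePath g) h rfl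
        (fun hA => by
          have := hA.2; rw [hq, edgePath_edges, List.cons_prefix_cons] at this
          exact htl (List.prefix_nil.mp this.2))
        ⟨by rw [edgePath_start, hstart], by rw [edgePath_edges, hq]; exact ⟨tl, rfl⟩⟩
    first | unfold vIdem | unfold edgeIdem
    rw [he]
    rw [edgePath_edges] at hdt
    have : d = q := GPath.ext' (by rw [hds, edgePath_start, hstart])
      (by rw [hde, edgePath_edges, hdt])
    subst this; rfl

theorem mul_edgeIdem_eq_zero {p q : GPath Q} {h : p.rng = q.rng} {g g' : Q.E} {tl : List Q.E}
    (hne : g ≠ g') (hq : q.edges = g' :: tl) :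
    GIS.elm p q h * edgeIdem g = 0 := by
  refine mul_elm_zero h rfl (fun hA => ?_) (fun hB => ?_)
  · have := hA.2; rw [edgePath_edges, hq, List.cons_prefix_cons] at this
    exact hne this.1.symm
  · have := hB.2; rw [edgePath_edges, hq, List.cons_prefix_cons] at this
    exact hne this.1

end DGraph
namespace DGraph

variable {Q : DGraph}

open Filter Topology

section Topo

variable [TopologicalSpace (GIS Q)] [T2Space (GIS Q)]

/-- Left-side contradiction: a filter converging to a vertex idempotent cannot
concentrate on elements whose first path is nonempty. -/
theorem side_left (hs : ∀ a : GIS Q, Continuous (fun x => a * x) ∧ Continuous (fun x => x * a))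
    {a : Q.V} (G : Filter (GIS Q)) [G.NeBot] (hG : G ≤ 𝓝 (vIdem Q a))
    (hmem : {z : GIS Q | ∃ (p q : GPath Q) (hpq : p.rng = q.rng),
        z = GIS.elm p q hpq ∧ p.start = a ∧ p.edges ≠ []} ∈ G) : False := by
  set A : Set (GIS Q) := {z : GIS Q | ∃ (p q : GPath Q) (hpq : p.rng = q.rng),
        z = GIS.elm p q hpq ∧ p.start = a ∧ p.edges ≠ []} with hAdef
  obtain ⟨z₀, p₀, q₀, hpq₀, rfl, hpa₀, hpe₀⟩ := Filter.nonempty_of_mem hmem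
  cases hedges : p₀.edges with
  | nil => exact hpe₀ hedges
  | cons g tl =>
  have hg : Q.s g = a := by
    have := p₀.ok; rw [hedges] at this; exact hpa₀ ▸ this.1
  set K : Set (GIS Q) := {z : GIS Q | ∃ (p q : GPath Q) (hpq : p.rng = q.rng) (tl' : List Q.E),
      z = GIS.elm p q hpq ∧ p.edges = g :: tl'} with hKdef
  have hcont : Tendsto (fun z => edgeIdem g * z) G (𝓝 (edgeIdem g * vIdem Q a)) :=
    ((hs (edgeIdem g)).1.tendsto _).mono_left hG
  have hlim : edgeIdem g * vIdem Q a = edgeIdem g :=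
    mul_vIdem_eq_self (by rw [edgePath_start, hg])
  rw [hlim] at hcont
  by_cases hK : (G ⊓ 𝓟 K).NeBot
  · have hle : G ⊓ 𝓟 K ≤ 𝓝 (vIdem Q a) := le_trans inf_le_left hG
    have t1 : Tendsto (fun z => edgeIdem g * z) (G ⊓ 𝓟 K) (𝓝 (edgeIdem g)) :=
      hcont.mono_left inf_le_left
    have t2 : Tendsto (fun z => edgeIdem g * z) (G ⊓ 𝓟 K) (𝓝 (vIdem Q a)) := by
      refine Tendsto.congr' ?_ (tendsto_id.mono_right hle)
      filter_upwards [mem_inf_of_right (mem_principal_self K)] with z hz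
      obtain ⟨p, q, hpq, tl', rfl, hpe⟩ := hz
      exact (edgeIdem_mul_eq_self hpe).symm
    exact edgeIdem_ne_vIdem (tendsto_nhds_unique t1 t2)
  · have hKc : Kᶜ ∈ G := by
      rw [← Filter.inf_principal_eq_bot]
      exact Filter.not_neBot.mp hK
    have t2 : Tendsto (fun z => edgeIdem g * z) G (𝓝 0) := by
      refine Tendsto.congr' ?_ tendsto_const_nhds
      filter_upwards [hmem, hKc] with z hzA hzK
      obtain ⟨p, q, hpq, rfl, hpa, hpe⟩ := hzA
      cases hpe' : p.edges with
      | nil => exact absurd hpe' hpe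
      | cons g' tl' =>
        have hne : g ≠ g' := by
          rintro rfl
          exact hzK ⟨p, q, hpq, tl', rfl, hpe'⟩
        exact (edgeIdem_mul_eq_zero hne hpe').symm
    exact edgeIdem_ne_zero (tendsto_nhds_unique hcont t2)

/-- Right-side contradiction, mirror image of `side_left`. -/
theorem side_right (hs : ∀ a : GIS Q, Continuous (fun x => a * x) ∧ Continuous (fun x => x * a))
    {a : Q.V} (G : Filter (GIS Q)) [G.NeBot] (hG : G ≤ 𝓝 (vIdem Q a))
    (hmem : {z : GIS Q | ∃ (p q : GPath Q) (hpq : p.rng = q.rng),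
        z = GIS.elm p q hpq ∧ q.start = a ∧ q.edges ≠ []} ∈ G) : False := by
  obtain ⟨z₀, p₀, q₀, hpq₀, rfl, hqa₀, hqe₀⟩ := Filter.nonempty_of_mem hmem
  cases hedges : q₀.edges with
  | nil => exact hqe₀ hedges
  | cons g tl =>
  have hg : Q.s g = a := by
    have := q₀.ok; rw [hedges] at this; exact hqa₀ ▸ this.1
  set K : Set (GIS Q) := {z : GIS Q | ∃ (p q : GPath Q) (hpq : p.rng = q.rng) (tl' : List Q.E),
      z = GIS.elm p q hpq ∧ q.edges = g :: tl'} with hKdef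
  have hcont : Tendsto (fun z => z * edgeIdem g) G (𝓝 (vIdem Q a * edgeIdem g)) :=
    ((hs (edgeIdem g)).2.tendsto _).mono_left hG
  have hlim : vIdem Q a * edgeIdem g = edgeIdem g :=
    vIdem_mul_eq_self (by rw [edgePath_start, hg])
  rw [hlim] at hcont
  by_cases hK : (G ⊓ 𝓟 K).NeBot
  · have hle : G ⊓ 𝓟 K ≤ 𝓝 (vIdem Q a) := le_trans inf_le_left hG
    have t1 : Tendsto (fun z => z * edgeIdem g) (G ⊓ 𝓟 K) (𝓝 (edgeIdem g)) :=
      hcont.mono_left inf_le_left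
    have t2 : Tendsto (fun z => z * edgeIdem g) (G ⊓ 𝓟 K) (𝓝 (vIdem Q a)) := by
      refine Tendsto.congr' ?_ (tendsto_id.mono_right hle)
      filter_upwards [mem_inf_of_right (mem_principal_self K)] with z hz
      obtain ⟨p, q, hpq, tl', rfl, hqe⟩ := hz
      exact (mul_edgeIdem_eq_self hqe).symm
    exact edgeIdem_ne_vIdem (tendsto_nhds_unique t1 t2)
  · have hKc : Kᶜ ∈ G := by
      rw [← Filter.inf_principal_eq_bot]
      exact Filter.not_neBot.mp hK
    have t2 : Tendsto (fun z => z * edgeIdem g) G (𝓝 0) := by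
      refine Tendsto.congr' ?_ tendsto_const_nhds
      filter_upwards [hmem, hKc] with z hzA hzK
      obtain ⟨p, q, hpq, rfl, hqa, hqe⟩ := hzA
      cases hqe' : q.edges with
      | nil => exact absurd hqe' hqe
      | cons g' tl' =>
        have hne : g ≠ g' := by
          rintro rfl
          exact hzK ⟨p, q, hpq, tl', rfl, hqe'⟩
        exact (mul_edgeIdem_eq_zero hne hqe').symm
    exact edgeIdem_ne_zero (tendsto_nhds_unique hcont t2)

theorem vIdem_isolated
    (hs : ∀ a : GIS Q, Continuous (fun x => a * x) ∧ Continuous (fun x => x * a))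
    (a : Q.V) : IsOpen ({vIdem Q a} : Set (GIS Q)) := by
  rw [isOpen_singleton_iff_punctured_nhds]
  by_contra hne
  have hF : (𝓝[≠] (vIdem Q a)).NeBot := ⟨hne⟩
  set F := 𝓝[≠] (vIdem Q a) with hFdef
  have hFle : F ≤ 𝓝 (vIdem Q a) := nhdsWithin_le_nhds
  -- the sandwiched product tends to vIdem
  have hm : Tendsto (fun z => vIdem Q a * z * vIdem Q a) F (𝓝 (vIdem Q a)) := by
    have c1 : Continuous fun z : GIS Q => vIdem Q a * z := (hs _).1
    have c2 : Continuous fun z : GIS Q => z * vIdem Q a := (hs _).2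
    have : Tendsto (fun z => vIdem Q a * z * vIdem Q a) (𝓝 (vIdem Q a))
        (𝓝 (vIdem Q a * vIdem Q a * vIdem Q a)) := (c2.comp c1).tendsto _
    rw [vIdem_mul_vIdem, vIdem_mul_vIdem] at this
    exact this.mono_left hFle
  have hS : ∀ᶠ z in F, vIdem Q a * z * vIdem Q a ≠ 0 :=
    hm.eventually (p := fun y => y ≠ 0) (eventually_ne_nhds vIdem_ne_zero)
  have hne' : ∀ᶠ z in F, z ≠ vIdem Q a := by
    have : {vIdem Q a}ᶜ ∈ F := self_mem_nhdsWithin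
    filter_upwards [this] with z hz
    simpa using hz
  set A : Set (GIS Q) := {z : GIS Q | ∃ (p q : GPath Q) (hpq : p.rng = q.rng),
      z = GIS.elm p q hpq ∧ p.start = a ∧ p.edges ≠ []} with hAdef
  set B : Set (GIS Q) := {z : GIS Q | ∃ (p q : GPath Q) (hpq : p.rng = q.rng),
      z = GIS.elm p q hpq ∧ q.start = a ∧ q.edges ≠ []} with hBdef
  have hAB : ∀ᶠ z in F, z ∈ A ∪ B := by
    filter_upwards [hS, hne'] with z hz0 hzne
    cases z with
    | zero =>
      have hz' : (GIS.zero : GIS Q) = 0 := rfl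
      rw [hz', mul_zero', zero_mul'] at hz0
      exact absurd rfl hz0
    | elm p q hpq =>
      have hpa : p.start = a := by
        by_contra hpa
        rw [vIdem_mul_eq_zero hpa, zero_mul'] at hz0
        exact hz0 rfl
      have hqa : q.start = a := by
        by_contra hqa
        rw [vIdem_mul_eq_self hpa, mul_vIdem_eq_zero hqa] at hz0
        exact hz0 rfl
      by_cases hpe : p.edges = []
      · right
        refine ⟨p, q, hpq, rfl, hqa, ?_⟩
        intro hqe
        apply hzne
        have hp : p = GPath.triv Q a := GPath.ext' hpa hpe
        have hq : q = GPath.triv Q a := GPath.ext' hqa hqe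
        subst hp; subst hq; rfl
      · left; exact ⟨p, q, hpq, rfl, hpa, hpe⟩
  by_cases hA : (F ⊓ 𝓟 A).NeBot
  · exact side_left hs (F ⊓ 𝓟 A) (le_trans inf_le_left hFle)
      (mem_inf_of_right (mem_principal_self A))
  · have hAc : Aᶜ ∈ F := by
      rw [← Filter.inf_principal_eq_bot]; exact Filter.not_neBot.mp hA
    by_cases hB : (F ⊓ 𝓟 B).NeBot
    · exact side_right hs (F ⊓ 𝓟 B) (le_trans inf_le_left hFle)
        (mem_inf_of_right (mem_principal_self B))
    · have hBc : Bᶜ ∈ F := by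
        rw [← Filter.inf_principal_eq_bot]; exact Filter.not_neBot.mp hB
      obtain ⟨z, hz1, hz2, hz3⟩ := (hAB.and ((Filter.eventually_mem_set.mpr hAc).and
        (Filter.eventually_mem_set.mpr hBc))).exists
      cases hz1 with
      | inl h => exact hz2 h
      | inr h => exact hz3 h

end Topo

end DGraph
namespace DGraph

variable {Q : DGraph}

/-- `u⁻¹` as an element of the semigroup. -/
def pathInvL (u : GPath Q) : GIS Q := GIS.elm (GPath.triv Q u.rng) u rfl

/-- `v` as an element of the semigroup (with trivial right part). -/
def pathR (v : GPath Q) : GIS Q := GIS.elm v (GPath.triv Q v.rng) rfl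

theorem list_eq_nil_of_append_self {l t : List Q.E} (h : l ++ t = l) : t = [] := by
  have := congrArg List.length h; simp at this; simp [this]

theorem f_at_x (u v : GPath Q) (h : u.rng = v.rng) :
    pathInvL u * GIS.elm u v h * pathR v = vIdem Q v.rng := by
  have step1 : pathInvL u * GIS.elm u v h = GIS.elm (GPath.triv Q u.rng) v (by rw [triv_rng, h]) := by
    obtain ⟨c, hc, t, he, hcs, hce, hct⟩ :=
      mul_elm_A (u₁ := GPath.triv Q u.rng) (v₁ := u) rfl h ⟨rfl, List.prefix_refl _⟩
    unfold pathInvL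
    rw [he]
    have ht : t = [] := list_eq_nil_of_append_self hct
    have : c = GPath.triv Q u.rng := GPath.ext'
      (by rw [hcs, triv_start]) (by rw [hce, ht, triv_edges, List.append_nil])
    subst this; rfl
  rw [step1]
  obtain ⟨c, hc, t, he, hcs, hce, hct⟩ :=
    mul_elm_A (u₁ := GPath.triv Q u.rng) (v₁ := v) (u₂ := v) (v₂ := GPath.triv Q v.rng)
      (by rw [triv_rng, h]) rfl ⟨rfl, List.prefix_refl _⟩
  unfold pathR
  rw [he]
  have ht : t = [] := list_eq_nil_of_append_self hct
  have : c = GPath.triv Q v.rng := GPath.ext'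
    (by rw [hcs, triv_start, triv_start, h]) (by rw [hce, ht, triv_edges, List.append_nil, triv_edges])
  subst this; rfl

theorem f_fiber {u v : GPath Q} {z : GIS Q}
    (hz : pathInvL u * z * pathR v = vIdem Q v.rng) :
    ∃ (p q : GPath Q) (hpq : p.rng = q.rng) (w : List Q.E),
      z = GIS.elm p q hpq ∧ p.start = u.start ∧ q.start = v.start ∧
      p.edges ++ w = u.edges ∧ q.edges ++ w = v.edges := by
  cases z with
  | zero =>
    have hz' : (GIS.zero : GIS Q) = 0 := rfl
    rw [hz', mul_zero', zero_mul'] at hz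
    exact absurd hz.symm vIdem_ne_zero
  | elm p q hpq =>
  refine ⟨p, q, hpq, ?_⟩
  by_cases hA₁ : p.start = u.start ∧ u.edges <+: p.edges
  · obtain ⟨c, hc, t, he, hcs, hce, hct⟩ :=
      mul_elm_A (u₁ := GPath.triv Q u.rng) (v₁ := u) rfl hpq hA₁
    unfold pathInvL at hz
    rw [he] at hz
    by_cases hA₂ : v.start = q.start ∧ q.edges <+: v.edges
    · obtain ⟨c₂, hc₂, t₂, he₂, hcs₂, hce₂, hct₂⟩ :=
        mul_elm_A (u₁ := c) (v₁ := q) (u₂ := v) (v₂ := GPath.triv Q v.rng) hc rfl hA₂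
      unfold pathR at hz
      rw [he₂] at hz
      unfold vIdem at hz
      obtain ⟨h1, -⟩ := elm_inj hz
      have hedges := congrArg GPath.edges h1
      rw [hce₂, hce, triv_edges, List.nil_append, triv_edges] at hedges
      obtain ⟨ht, ht₂⟩ := List.append_eq_nil_iff.mp hedges
      refine ⟨[], rfl, hA₁.1, hA₂.1.symm, ?_, ?_⟩
      · rw [List.append_nil]; rw [ht, List.append_nil] at hct; exact hct.symm
      · rw [List.append_nil]; rw [ht₂, List.append_nil] at hct₂; exact hct₂
    · by_cases hB₂ : q.start = v.start ∧ v.edges <+: q.edges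
      · obtain ⟨d₂, hd₂, t₂, he₂, hds₂, hde₂, hdt₂⟩ :=
          mul_elm_B (u₁ := c) (v₁ := q) (u₂ := v) (v₂ := GPath.triv Q v.rng) hc rfl hA₂ hB₂
        unfold pathR at hz
        rw [he₂] at hz
        unfold vIdem at hz
        obtain ⟨h1, h2⟩ := elm_inj hz
        have hedges1 := congrArg GPath.edges h1
        have hedges2 := congrArg GPath.edges h2
        rw [hce, triv_edges, List.nil_append] at hedges1
        rw [hde₂, triv_edges, List.nil_append] at hedges2
        have : t₂ = [] := by simpa [triv_edges] using hedges2
        rw [this, List.append_nil] at hdt₂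
        refine ⟨[], rfl, hA₁.1, hB₂.1, ?_, ?_⟩
        · rw [List.append_nil]
          rw [show t = [] from by simpa [triv_edges] using hedges1, List.append_nil] at hct
          exact hct.symm
        · rw [List.append_nil]; exact hdt₂.symm
      · unfold pathR at hz
        rw [mul_elm_zero (u₂ := v) (v₂ := GPath.triv Q v.rng) hc rfl hA₂ hB₂] at hz
        exact absurd hz.symm vIdem_ne_zero
  · by_cases hB₁ : u.start = p.start ∧ p.edges <+: u.edges
    · obtain ⟨d, hd, t, he, hds, hde, hdt⟩ :=
        mul_elm_B (u₁ := GPath.triv Q u.rng) (v₁ := u) rfl hpq hA₁ hB₁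
      unfold pathInvL at hz
      rw [he] at hz
      by_cases hA₂ : v.start = d.start ∧ d.edges <+: v.edges
      · obtain ⟨c₂, hc₂, t₂, he₂, hcs₂, hce₂, hct₂⟩ :=
          mul_elm_A (u₁ := GPath.triv Q u.rng) (v₁ := d) (u₂ := v) (v₂ := GPath.triv Q v.rng)
            hd rfl hA₂
        unfold pathR at hz
        rw [he₂] at hz
        unfold vIdem at hz
        obtain ⟨h1, -⟩ := elm_inj hz
        have hedges := congrArg GPath.edges h1
        rw [hce₂, triv_edges, List.nil_append] at hedges
        have ht₂ : t₂ = [] := by simpa [GPath.triv] using hedges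
        rw [ht₂, List.append_nil] at hct₂
        rw [hde] at hct₂
        refine ⟨t, rfl, hB₁.1.symm, ?_, hdt, hct₂⟩
        rw [← hds, hA₂.1]
      · by_cases hB₂ : d.start = v.start ∧ v.edges <+: d.edges
        · obtain ⟨d₂, hd₂, t₂, he₂, hds₂, hde₂, hdt₂⟩ :=
            mul_elm_B (u₁ := GPath.triv Q u.rng) (v₁ := d) (u₂ := v) (v₂ := GPath.triv Q v.rng)
              hd rfl hA₂ hB₂
          unfold pathR at hz
          rw [he₂] at hz
          unfold vIdem at hz
          obtain ⟨-, h2⟩ := elm_inj hz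
          have hedges := congrArg GPath.edges h2
          rw [hde₂, triv_edges, List.nil_append] at hedges
          have ht₂ : t₂ = [] := by simpa [GPath.triv] using hedges
          rw [ht₂, List.append_nil] at hdt₂
          rw [hde] at hdt₂
          refine ⟨t, rfl, hB₁.1.symm, hB₂.1.symm ▸ hds ▸ rfl, hdt, hdt₂.symm⟩
        · unfold pathR at hz
          rw [mul_elm_zero (u₂ := v) (v₂ := GPath.triv Q v.rng) hd rfl hA₂ hB₂] at hz
          exact absurd hz.symm vIdem_ne_zero
    · unfold pathInvL at hz
      rw [mul_elm_zero (u₁ := GPath.triv Q u.rng) (v₁ := u) rfl hpq hA₁ hB₁, zero_mul'] at hz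
      exact absurd hz.symm vIdem_ne_zero

/-- Length of the first path of an element. -/
def gLen : GIS Q → ℕ := fun z => match z with
  | .zero => 0
  | .elm p _ _ => p.edges.length

end DGraph

open DGraph

theorem stmt7 (Q : DGraph) [TopologicalSpace (GIS Q)] [T2Space (GIS Q)]
    (hs : ∀ a : GIS Q, Continuous (fun x => a * x) ∧ Continuous (fun x => x * a)) :
    ∀ x : GIS Q, x ≠ 0 → IsOpen {x} := by
  intro x hx
  cases x with
  | zero => exact absurd rfl hx
  | elm u v h =>
    have hopen_e : IsOpen ({vIdem Q v.rng} : Set (GIS Q)) := vIdem_isolated hs v.rng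
    set f : GIS Q → GIS Q := fun z => pathInvL u * z * pathR v with hf
    have hfc : Continuous f := by
      have : Continuous ((fun y => y * pathR v) ∘ (fun z => pathInvL u * z)) :=
        (hs (pathR v)).2.comp (hs (pathInvL u)).1
      exact this
    set O : Set (GIS Q) := f ⁻¹' {vIdem Q v.rng} with hO
    have hOopen : IsOpen O := hopen_e.preimage hfc
    have hxO : GIS.elm u v h ∈ O := by
      have hfx : f (GIS.elm u v h) = vIdem Q v.rng := f_at_x u v h
      simp only [hO, Set.mem_preimage, Set.mem_singleton_iff]
      exact hfx
    have hOfin : O.Finite := by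
      apply Set.Finite.of_finite_image (f := gLen)
      · apply (Set.finite_Iic u.edges.length).subset
        rintro n ⟨z, hzO, rfl⟩
        obtain ⟨p, q, hpq, w, rfl, -, -, hpw, -⟩ := f_fiber hzO
        show p.edges.length ≤ u.edges.length
        rw [← hpw]; simp
      · intro z₁ hz₁ z₂ hz₂ hlen
        obtain ⟨p₁, q₁, hpq₁, w₁, rfl, hps₁, hqs₁, hpw₁, hqw₁⟩ := f_fiber hz₁
        obtain ⟨p₂, q₂, hpq₂, w₂, rfl, hps₂, hqs₂, hpw₂, hqw₂⟩ := f_fiber hz₂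
        have hlen' : p₁.edges.length = p₂.edges.length := hlen
        obtain ⟨hpe, hwe⟩ := List.append_inj (hpw₁.trans hpw₂.symm) hlen'
        have hqe : q₁.edges = q₂.edges := by
          rw [← hwe] at hqw₂
          have := hqw₁.trans hqw₂.symm
          exact List.append_cancel_right this
        have hp : p₁ = p₂ := GPath.ext' (hps₁.trans hps₂.symm) hpe
        have hq : q₁ = q₂ := GPath.ext' (hqs₁.trans hqs₂.symm) hqe
        subst hp; subst hq; rfl
    have hset : ({GIS.elm u v h} : Set (GIS Q)) = O \ (O \ {GIS.elm u v h}) := by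
      ext z
      simp only [Set.mem_singleton_iff, Set.mem_diff]
      constructor
      · rintro rfl
        exact ⟨hxO, fun hc => hc.2 rfl⟩
      · rintro ⟨hzO, hz⟩
        by_contra hne
        exact hz ⟨hzO, hne⟩
    rw [hset]
    exact hOopen.sdiff ((hOfin.subset Set.diff_subset).isClosed)
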